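/- Let K, α, t be integers with 2 ≤ α ≤ K - 1 and 0 ≤ t ≤ α - 1. Then (C(α, t+1) + (K - α)·C(α-1, t)) / C(α, t) · C(K, t) / C(K, t+1) = 1 + t(K - α)(α - 1 - t) / (α(K - t)), as an identity of rational numbers. -/

import Mathlib

/-! Each binomial quotient on the left, `C(α, t+1) / C(α, t)`, `C(α-1, t) / C(α, t)` and
`C(K, t) / C(K, t+1)`, is a quotient of linear factors in `α`, `K`, `t`; after substituting them
the identity is one between rational functions. -/

namespace Nat

variable {F : Type*} [Field F] [CharZero F]

theorem cast_choose_succ_div_cast_choose {n k : ℕ} (hk : k ≤ n) :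
    (n.choose (k + 1) : F) / n.choose k = (n - k) / (k + 1) := by
  have hchoose : (n.choose k : F) ≠ 0 := mod_cast (choose_pos hk).ne'
  rw [div_eq_div_iff hchoose (cast_add_one_ne_zero k)]
  have h := congrArg (Nat.cast : ℕ → F) (choose_succ_right_eq n k)
  push_cast [cast_sub hk] at h
  linear_combination h

theorem cast_choose_div_cast_choose_succ {n k : ℕ} (hk : k < n) :
    (n.choose k : F) / n.choose (k + 1) = (k + 1) / (n - k) := by
  rw [← inv_div, cast_choose_succ_div_cast_choose hk.le, inv_div]

theorem cast_choose_pred_div_cast_choose {n k : ℕ} (hn : 0 < n) (hk : k ≤ n) :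
    ((n - 1).choose k : F) / n.choose k = (n - k) / n := by
  obtain ⟨m, rfl⟩ := exists_eq_add_one_of_ne_zero hn.ne'
  have hchoose : ((m + 1).choose k : F) ≠ 0 := mod_cast (choose_pos hk).ne'
  rw [add_tsub_cancel_right, div_eq_div_iff hchoose (cast_ne_zero.mpr (succ_ne_zero m))]
  have h := congrArg (Nat.cast : ℕ → F) (choose_mul_succ_eq m k)
  push_cast [cast_sub hk] at h ⊢
  linear_combination h

end Nat

/-- Ratio of the selfish converse bound to the MAN load. -/
theorem selfish_over_man_ratio (K α t : ℕ) (hα : 2 ≤ α) (hK : α ≤ K - 1)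
    (ht : t ≤ α - 1) :
    (((α.choose (t + 1) : ℚ) + ((K : ℚ) - α) * ((α - 1).choose t : ℚ)) / (α.choose t : ℚ))
      * ((K.choose t : ℚ) / (K.choose (t + 1) : ℚ))
    = 1 + ((t : ℚ) * ((K : ℚ) - α) * ((α : ℚ) - 1 - t)) / ((α : ℚ) * ((K : ℚ) - t)) := by
  have htα : t < α := by omega
  have htK : t < K := by omega
  have hα0 : (α : ℚ) ≠ 0 := mod_cast (by omega : α ≠ 0)
  have hKt : (K : ℚ) - t ≠ 0 := sub_ne_zero.mpr (mod_cast htK.ne')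
  rw [add_div, mul_div_assoc, Nat.cast_choose_succ_div_cast_choose htα.le,
    Nat.cast_choose_pred_div_cast_choose (by omega) htα.le,
    Nat.cast_choose_div_cast_choose_succ htK]
  field_simp
  ring
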